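/- arXiv:2303.17858 — 3 statements merged into one kernel-verified Lean document; each statement's English description precedes it below -/
import Mathlib

section
/- Suppose V: [0,∞) → [0,∞) is a piecewise absolutely continuous function such that on each inter-switch interval V̇(t) ≤ -(α/ā) V(t), and at each switching time t_k, V(t_k) ≤ μ·lim_{t→t_k⁻} V(t), where μ ≥ 1, α > 0, ā > 0. If the switching times have average dwell-time τ_a > ā·ln(μ)/α with chatter bound N_0, then V(t) ≤ μ^{N_0} e^{-λ t} V(0) for all t ≥ 0, where λ = α/ā − ln(μ)/τ_a > 0. -/
/-!
Put `β = α / ā` and `W t = V t * exp (β t)`. The decay condition makes `W` nonincreasing on every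
interval without switches, and the jump condition lets `W` grow by at most the factor `μ` at a
switch, so `W t ≤ μ ^ n * V 0` where `n` is the number of switches in `(0, t]`. The average
dwell-time bound gives `n ≤ N₀ + t / τₐ`, hence `μ ^ n ≤ μ ^ N₀ * exp (t log μ / τₐ)`, which is
the claimed estimate after multiplying by `exp (-β t)`.
-/

open Real Set Filter Topology

def HasAverageDwellTime (tk : ℕ → ℝ) (τa N0 : ℝ) : Prop :=
  ∀ s t : ℝ, 0 ≤ s → s ≤ t → (({k : ℕ | tk k ∈ Ioo s t}.ncard : ℝ) ≤ N0 + (t - s) / τa)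

lemma Monotone.exists_forall_le_iff_lt {tk : ℕ → ℝ} {t : ℝ} (htk : Monotone tk)
    (h : ∃ k, t < tk k) : ∃ n, ∀ k, tk k ≤ t ↔ k < n := by
  classical
  refine ⟨Nat.find h, fun k => ⟨fun hk => ?_, fun hk => not_lt.mp (Nat.find_min h hk)⟩⟩
  by_contra! hnk
  exact (Nat.find_spec h).not_ge ((htk hnk).trans hk)

lemma StrictMono.eventually_nhdsLT_forall_le_iff_lt {tk : ℕ → ℝ} (htk : StrictMono tk)
    (htk0 : 0 < tk 0) (n : ℕ) : ∀ᶠ x in 𝓝[<] tk n, 0 ≤ x ∧ ∀ k, tk k ≤ x ↔ k < n := by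
  cases n with
  | zero =>
    filter_upwards [Ioo_mem_nhdsLT htk0] with x hx
    exact ⟨hx.1.le, fun k => iff_of_false
      (fun hk => (htk.monotone k.zero_le).not_gt (hk.trans_lt hx.2)) k.not_lt_zero⟩
  | succ m =>
    filter_upwards [Ioo_mem_nhdsLT (htk m.lt_succ_self)] with x hx
    refine ⟨(htk0.le.trans (htk.monotone m.zero_le)).trans hx.1.le, fun k => ⟨fun hk => ?_, ?_⟩⟩
    · exact htk.lt_iff_lt.mp (hk.trans_lt hx.2)
    · exact fun hk => (htk.monotone (Nat.lt_succ_iff.mp hk)).trans hx.1.le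

namespace HasAverageDwellTime

variable {tk : ℕ → ℝ} {τa N0 : ℝ}

lemma natCast_le_of_forall_lt_iff (h : HasAverageDwellTime tk τa N0) (htk : StrictMono tk)
    (htk0 : 0 < tk 0) {s : ℝ} {n : ℕ} (hs : 0 ≤ s) (hn : ∀ k, tk k < s ↔ k < n) :
    (n : ℝ) ≤ N0 + s / τa := by
  have hset : {k : ℕ | tk k ∈ Ioo 0 s} = Iio n := by
    ext k
    simp only [mem_ofPred_eq, mem_Ioo, mem_Iio, ← hn k, and_iff_right_iff_imp]
    exact fun _ => htk0.trans_le (htk.monotone k.zero_le)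
  simpa only [hset, ncard_Iio_nat, sub_zero] using h 0 s le_rfl hs

lemma natCast_le_of_forall_le_iff (h : HasAverageDwellTime tk τa N0) (htk : StrictMono tk)
    (htk0 : 0 < tk 0) {t : ℝ} {n : ℕ} (ht : 0 ≤ t) (hn : ∀ k, tk k ≤ t ↔ k < n) :
    (n : ℝ) ≤ N0 + t / τa := by
  have htn : t < tk n := not_le.mp fun h => (lt_irrefl n) ((hn n).mp h)
  have hlim : Tendsto (fun s => N0 + s / τa) (𝓝[>] t) (𝓝 (N0 + t / τa)) :=
    ((continuous_const.add (continuous_id.div_const τa)).tendsto t).mono_left nhdsWithin_le_nhds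
  -- exactly `n` switches lie in `(0, s)` for `s ∈ (t, tk n)`; let `s` decrease to `t`
  refine ge_of_tendsto hlim ?_
  filter_upwards [Ioo_mem_nhdsGT htn] with s hs
  refine h.natCast_le_of_forall_lt_iff htk htk0 (ht.trans hs.1.le) fun k => ⟨fun hk => ?_, ?_⟩
  · exact htk.lt_iff_lt.mp (hk.trans hs.2)
  · exact fun hk => ((hn k).mpr hk).trans_lt hs.1

lemma exists_lt (h : HasAverageDwellTime tk τa N0) (htk : StrictMono tk) (htk0 : 0 < tk 0)
    (hτa : 0 ≤ τa) (T : ℝ) : ∃ k, T < tk k := by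
  by_contra! hT
  obtain ⟨n, hn⟩ := exists_nat_gt (N0 + T / τa)
  have hcount := h.natCast_le_of_forall_lt_iff htk htk0
    (htk0.le.trans (htk.monotone n.zero_le)) fun k => htk.lt_iff_lt (b := n)
  have : tk n / τa ≤ T / τa := div_le_div_of_nonneg_right (hT n) hτa
  linarith

end HasAverageDwellTime

lemma antitoneOn_mul_exp_of_hasDerivAt_le {f : ℝ → ℝ} {β a c : ℝ}
    (hfa : ContinuousWithinAt f (Ici a) a)
    (hf : ∀ x ∈ Ioc a c, ∃ v, HasDerivAt f v x ∧ v ≤ -β * f x) :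
    AntitoneOn (fun x => f x * exp (β * x)) (Icc a c) := by
  have hexp (x : ℝ) : HasDerivAt (fun y => exp (β * y)) (exp (β * x) * β) x := by
    simpa using ((hasDerivAt_id x).const_mul β).exp
  choose! f' hf' hf'le using hf
  refine antitoneOn_of_hasDerivWithinAt_nonpos (convex_Icc a c)
    (f' := fun x => f' x * exp (β * x) + f x * (exp (β * x) * β)) ?_ ?_ ?_
  · refine ContinuousOn.mul (fun x hx => ?_) (by fun_prop)
    rcases hx.1.eq_or_lt with rfl | hax
    · exact hfa.mono Icc_subset_Ici_self
    · exact (hf' x ⟨hax, hx.2⟩).continuousAt.continuousWithinAt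
  · rw [interior_Icc]
    exact fun x hx => ((hf' x (Ioo_subset_Ioc_self hx)).mul (hexp x)).hasDerivWithinAt
  · rw [interior_Icc]
    intro x hx
    have := hf'le x (Ioo_subset_Ioc_self hx)
    have hpos := exp_pos (β * x)
    nlinarith

lemma mul_exp_le_of_tendsto_nhdsLT {f : ℝ → ℝ} {β μ b L C : ℝ} (hμ : 0 ≤ μ)
    (hL : Tendsto f (𝓝[<] b) (𝓝 L)) (hfb : f b ≤ μ * L)
    (hC : ∀ᶠ x in 𝓝[<] b, f x * exp (β * x) ≤ C) : f b * exp (β * b) ≤ μ * C := by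
  have hLC : L * exp (β * b) ≤ C :=
    le_of_tendsto (hL.mul ((continuous_exp.comp (continuous_const_mul β)).tendsto b
      |>.mono_left nhdsWithin_le_nhds)) hC
  calc f b * exp (β * b) ≤ μ * L * exp (β * b) := by gcongr
    _ = μ * (L * exp (β * b)) := mul_assoc _ _ _
    _ ≤ μ * C := by gcongr

theorem mul_exp_le_pow_mul_of_forall_le_iff {V : ℝ → ℝ} {tk : ℕ → ℝ} {β μ : ℝ} (hμ : 0 ≤ μ)
    (htk : StrictMono tk) (htk0 : 0 < tk 0)
    (hVcont : ∀ t, 0 ≤ t → ContinuousWithinAt V (Ici t) t)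
    (hdecay : ∀ t, 0 < t → t ∉ range tk → ∃ v, HasDerivAt V v t ∧ v ≤ -β * V t)
    (hjump : ∀ k, ∃ L, Tendsto V (𝓝[<] (tk k)) (𝓝 L) ∧ V (tk k) ≤ μ * L)
    (n : ℕ) {t : ℝ} (ht : 0 ≤ t) (hn : ∀ k, tk k ≤ t ↔ k < n) :
    V t * exp (β * t) ≤ μ ^ n * V 0 := by
  have hflow {a c : ℝ} (ha : 0 ≤ a) (hac : a ≤ c) (hfree : ∀ k, tk k ≤ c → tk k ≤ a) :
      V c * exp (β * c) ≤ V a * exp (β * a) := by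
    refine antitoneOn_mul_exp_of_hasDerivAt_le (hVcont a ha) (fun x hx => hdecay x
      (ha.trans_lt hx.1) ?_) ⟨le_rfl, hac⟩ ⟨hac, le_rfl⟩ hac
    rintro ⟨k, rfl⟩
    exact (hfree k hx.2).not_gt hx.1
  induction n generalizing t with
  | zero => simpa using hflow le_rfl ht fun k hk => absurd ((hn k).mp hk) k.not_lt_zero
  | succ n ih =>
    have htn : tk n ≤ t := (hn n).mpr n.lt_succ_self
    obtain ⟨L, hL, hjumpn⟩ := hjump n
    have hbefore : ∀ᶠ x in 𝓝[<] tk n, V x * exp (β * x) ≤ μ ^ n * V 0 :=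
      (htk.eventually_nhdsLT_forall_le_iff_lt htk0 n).mono fun x hx => ih hx.1 hx.2
    calc V t * exp (β * t) ≤ V (tk n) * exp (β * tk n) :=
          hflow (htk0.le.trans (htk.monotone n.zero_le)) htn
            fun k hk => htk.monotone (Nat.lt_succ_iff.mp ((hn k).mp hk))
      _ ≤ μ * (μ ^ n * V 0) := mul_exp_le_of_tendsto_nhdsLT hμ hL hjumpn hbefore
      _ = μ ^ (n + 1) * V 0 := by ring

lemma pow_le_rpow_mul_exp_of_natCast_le {μ τa N0 t : ℝ} {n : ℕ} (hμ : 1 ≤ μ)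
    (hn : (n : ℝ) ≤ N0 + t / τa) : μ ^ n ≤ μ ^ N0 * exp (log μ / τa * t) := by
  have hμ0 : 0 < μ := one_pos.trans_le hμ
  calc μ ^ n = μ ^ (n : ℝ) := (rpow_natCast μ n).symm
    _ ≤ μ ^ (N0 + t / τa) := rpow_le_rpow_of_exponent_le hμ hn
    _ = μ ^ N0 * exp (log μ / τa * t) := by
      rw [rpow_add hμ0, rpow_def_of_pos hμ0 (t / τa), mul_div_assoc', div_mul_eq_mul_div]

lemma sub_log_div_pos {α abar μ τa : ℝ} (hα : 0 < α) (habar : 0 < abar) (hμ : 1 ≤ μ)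
    (hτa : abar * log μ / α < τa) : 0 < α / abar - log μ / τa := by
  have hlog : 0 ≤ log μ := log_nonneg hμ
  have hτa0 : 0 < τa := (by positivity : 0 ≤ abar * log μ / α).trans_lt hτa
  rw [sub_pos, div_lt_div_iff₀ hτa0 habar]
  nlinarith [(div_lt_iff₀ hα).mp hτa]

theorem multiple_lyapunov_decay_general
    (V : ℝ → ℝ) (tk : ℕ → ℝ) (α abar μ τa N0 : ℝ)
    (hα : 0 < α) (habar : 0 < abar) (hμ : 1 ≤ μ)
    (hτa : τa > abar * Real.log μ / α)
    (hVnonneg : ∀ t, 0 ≤ t → 0 ≤ V t)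
    (htk : StrictMono tk) (htk0 : 0 < tk 0)
    -- `V` is right-continuous and differentiable off the switching times, with decay
    (hVcont : ∀ t, 0 ≤ t → ContinuousWithinAt V (Set.Ici t) t)
    (hdecay : ∀ t, 0 < t → t ∉ Set.range tk →
      ∃ v : ℝ, HasDerivAt V v t ∧ v ≤ -(α / abar) * V t)
    -- jump condition at each switching time via the left limit
    (hjump : ∀ k : ℕ, ∃ Vleft : ℝ,
      Filter.Tendsto V (nhdsWithin (tk k) (Set.Iio (tk k))) (nhds Vleft) ∧
      V (tk k) ≤ μ * Vleft)
    -- average dwell-time property of the switching times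
    (hADT : ∀ s t : ℝ, 0 ≤ s → s ≤ t →
      (({k : ℕ | tk k ∈ Set.Ioo s t}.ncard : ℝ) ≤ N0 + (t - s) / τa)) :
    0 < α / abar - Real.log μ / τa ∧
    ∀ t, 0 ≤ t →
      V t ≤ μ ^ (N0 : ℝ) * Real.exp (-(α / abar - Real.log μ / τa) * t) * V 0 := by
  have hdwell : HasAverageDwellTime tk τa N0 := hADT
  have hτa0 : 0 ≤ τa := (div_nonneg (mul_nonneg habar.le (log_nonneg hμ)) hα.le).trans hτa.le
  refine ⟨sub_log_div_pos hα habar hμ hτa, fun t ht => ?_⟩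
  obtain ⟨n, hn⟩ := htk.monotone.exists_forall_le_iff_lt (hdwell.exists_lt htk htk0 hτa0 t)
  have hW := mul_exp_le_pow_mul_of_forall_le_iff (zero_le_one.trans hμ) htk htk0 hVcont hdecay
    hjump n ht hn
  have hpow := pow_le_rpow_mul_exp_of_natCast_le hμ
    (hdwell.natCast_le_of_forall_le_iff htk htk0 ht hn)
  calc V t = V t * exp (α / abar * t) * exp (-(α / abar * t)) := by
        rw [mul_assoc, ← exp_add, add_neg_cancel, exp_zero, mul_one]
    _ ≤ μ ^ N0 * exp (log μ / τa * t) * V 0 * exp (-(α / abar * t)) :=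
        mul_le_mul_of_nonneg_right (hW.trans (mul_le_mul_of_nonneg_right hpow (hVnonneg 0 le_rfl)))
          (exp_pos _).le
    _ = μ ^ N0 * exp (-(α / abar - log μ / τa) * t) * V 0 := by
        rw [mul_right_comm, mul_assoc (μ ^ N0), ← exp_add]
        ring_nf

/-- If `V : [0,∞) → [0,∞)` satisfies `V̇ ≤ -(α/ā) V` between switching times,
jumps by at most a factor `μ ≥ 1` at each switching time (w.r.t. the left limit), and the
switching times `tk` have average dwell-time `τa > ā ln μ / α` with chatter bound `N0`, then
`V t ≤ μ^{N0} e^{-λ t} V 0` for all `t ≥ 0`, where `λ = α/ā − ln μ / τa > 0`. -/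
theorem multiple_lyapunov_decay
    (V : ℝ → ℝ) (tk : ℕ → ℝ) (α abar μ τa N0 : ℝ)
    (hα : 0 < α) (habar : 0 < abar) (hμ : 1 ≤ μ) (hN0 : 0 < N0)
    (hτa : τa > abar * Real.log μ / α)
    (hVnonneg : ∀ t, 0 ≤ t → 0 ≤ V t)
    (htk : StrictMono tk) (htk0 : 0 < tk 0)
    -- `V` is right-continuous and differentiable off the switching times, with decay
    (hVcont : ∀ t, 0 ≤ t → ContinuousWithinAt V (Set.Ici t) t)
    (hdecay : ∀ t, 0 < t → t ∉ Set.range tk →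
      ∃ v : ℝ, HasDerivAt V v t ∧ v ≤ -(α / abar) * V t)
    -- jump condition at each switching time via the left limit
    (hjump : ∀ k : ℕ, ∃ Vleft : ℝ,
      Filter.Tendsto V (nhdsWithin (tk k) (Set.Iio (tk k))) (nhds Vleft) ∧
      V (tk k) ≤ μ * Vleft)
    -- average dwell-time property of the switching times
    (hADT : ∀ s t : ℝ, 0 ≤ s → s ≤ t →
      (({k : ℕ | tk k ∈ Set.Ioo s t}.ncard : ℝ) ≤ N0 + (t - s) / τa)) :
    0 < α / abar - Real.log μ / τa ∧
    ∀ t, 0 ≤ t →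
      V t ≤ μ ^ (N0 : ℝ) * Real.exp (-(α / abar - Real.log μ / τa) * t) * V 0 :=
  multiple_lyapunov_decay_general V tk α abar μ τa N0 hα habar hμ hτa hVnonneg htk htk0 hVcont
    hdecay hjump hADT
end

section
/- Let V_i: ℝⁿ → ℝ (i ∈ P, finite) be continuous functions such that a̲‖x‖ ≤ V_i(x) ≤ ā‖x‖ for all x, the upper right Dini derivative along solutions of ẋ = A_ix satisfies D⁺V_i(x, A_ix) ≤ -(α/ā)V_i(x), and V_i(x) ≤ μV_j(x) for all i ≠ j, where a̲, ā, α > 0, μ ≥ 1. Then along any solution x(·) of the switched system ẋ = A_σx with switching signal σ of average dwell-time τ_a > ā·ln(μ)/α and chatter bound N_0, we have ‖x(t)‖ ≤ (ā/a̲)·μ^{N_0}·e^{-λt}·‖x(0)‖ with λ = α/ā − ln(μ)/τ_a > 0; i.e., the origin is globally exponentially stable uniformly over Σ_{τ_a}. -/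
open Matrix

/-- Upper right Dini derivative of `V` at `x` along the flow `h ↦ e^{hA} x` of `ẋ = Ax`. -/
noncomputable def diniAlong {n : ℕ} (V : EuclideanSpace ℝ (Fin n) → ℝ)
    (A : Matrix (Fin n) (Fin n) ℝ) (x : EuclideanSpace ℝ (Fin n)) : ℝ :=
  Filter.limsup
    (fun h : ℝ => (V (Matrix.toEuclideanLin (NormedSpace.exp (h • A)) x) - V x) / h)
    (nhdsWithin 0 (Set.Ioi 0))

/-! Between two switches the active `V i` decays like `e^{-(α/ā)t}`: the solution follows the
linear flow `e^{tA_i}`, and a comparison argument for the upper right Dini derivative turns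
`D⁺V_i ≤ -(α/ā) V_i` into this exponential bound. At a switch `V` grows at most by the
factor `μ`, so after `m` switches `V_{σ(t)}(x t) ≤ μ^m e^{-(α/ā)t} V_{σ(0)}(x 0)`. The average
dwell-time bound gives `m ≤ N0 + t/τa`, hence `μ^m ≤ μ^{N0} e^{t ln μ/τa}`, and the sandwich
bounds turn the estimate for `V` into one for `‖x‖`. -/

open NormedSpace Filter Set Topology

section LinearFlow

variable {E : Type*} [NormedAddCommGroup E] [NormedSpace ℝ E]

-- Mathlib's lemmas on `NormedSpace.exp` in Banach algebras need a normed `ℚ`-algebra.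
noncomputable local instance : NormedAlgebra ℚ (E →L[ℝ] E) := NormedAlgebra.restrictScalars ℚ ℝ _

theorem Matrix.toEuclideanLin_exp_apply {n : ℕ} (M : Matrix (Fin n) (Fin n) ℝ)
    (v : EuclideanSpace ℝ (Fin n)) :
    toEuclideanLin (exp M) v = exp (toEuclideanCLM (𝕜 := ℝ) M) v := by
  -- `map_exp` needs a Banach-algebra norm on matrices; any choice will do
  let : NormedRing (Matrix (Fin n) (Fin n) ℝ) := Matrix.linftyOpNormedRing
  let : NormedAlgebra ℚ (Matrix (Fin n) (Fin n) ℝ) := Matrix.linftyOpNormedAlgebra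
  let : NormedAlgebra ℝ (Matrix (Fin n) (Fin n) ℝ) := Matrix.linftyOpNormedAlgebra
  have hcont : Continuous (toEuclideanCLM (𝕜 := ℝ) (n := Fin n)) :=
    (toEuclideanCLM (𝕜 := ℝ) (n := Fin n)).toAlgEquiv.toLinearMap
      |>.continuous_of_finiteDimensional
  exact congr($(map_exp _ hcont M) v)

theorem diniAlong_eq_limsup {n : ℕ} (V : EuclideanSpace ℝ (Fin n) → ℝ)
    (A : Matrix (Fin n) (Fin n) ℝ) (v : EuclideanSpace ℝ (Fin n)) :
    diniAlong V A v =
      limsup (fun h : ℝ => (V (exp (h • toEuclideanCLM (𝕜 := ℝ) A) v) - V v) / h) (𝓝[>] 0) := by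
  simp only [diniAlong, Matrix.toEuclideanLin_exp_apply, map_smul]

theorem frequently_slope_exp_smul_lt {V : E → ℝ} {L : E →L[ℝ] E} {c : ℝ} (hc : 0 < c)
    (hV0 : V 0 = 0) (hVpos : ∀ v ≠ 0, 0 < V v) {v : E}
    (hdini : limsup (fun h : ℝ => (V (exp (h • L) v) - V v) / h) (𝓝[>] 0) ≤ -c * V v)
    {r : ℝ} (hr : -c * V v < r) :
    ∃ᶠ h in 𝓝[>] (0 : ℝ), (V (exp (h • L) v) - V v) / h < r := by
  rcases eq_or_ne v 0 with rfl | hv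
  · simp only [map_zero, hV0, sub_self, zero_div, mul_zero] at hr ⊢
    exact Frequently.of_forall fun _ => hr
  -- the limsup is negative, so not the junk value `0` of an unbounded function
  have hbdd : IsBoundedUnder (· ≤ ·) (𝓝[>] 0) fun h : ℝ => (V (exp (h • L) v) - V v) / h := by
    by_contra hunb
    rw [Real.limsup_of_not_isBoundedUnder hunb] at hdini
    nlinarith [hVpos v hv]
  exact (eventually_lt_of_limsup_lt (hdini.trans_lt hr) hbdd).frequently

variable [CompleteSpace E]

theorem exp_add_smul_apply (L : E →L[ℝ] E) (p q : ℝ) (v : E) :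
    exp ((p + q) • L) v = exp (p • L) (exp (q • L) v) := by
  rw [add_smul, exp_add_of_commute (((Commute.refl L).smul_left p).smul_right q)]
  rfl

theorem hasDerivAt_exp_smul_apply (L : E →L[ℝ] E) (v : E) (t : ℝ) :
    HasDerivAt (fun s : ℝ => exp (s • L) v) (L (exp (t • L) v)) t := by
  simpa using (hasDerivAt_exp_smul_const' L t).clm_apply (hasDerivAt_const t v)

theorem eq_exp_smul_apply_of_hasDerivAt {L : E →L[ℝ] E} {x : ℝ → E} {a b : ℝ} (hab : a ≤ b)
    (hx : ContinuousOn x (Icc a b)) (hode : ∀ u ∈ Ioo a b, HasDerivAt x (L (x u)) u) :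
    x b = exp ((b - a) • L) (x a) := by
  rcases hab.eq_or_lt with rfl | hab
  · simp
  -- the equation also holds at `a`, as a right derivative, since `x'` extends continuously there
  have hright : HasDerivWithinAt x (L (x a)) (Ici a) a := by
    have hxa : Tendsto x (𝓝[>] a) (𝓝 (x a)) :=
      (hx a ⟨le_rfl, hab.le⟩).mono_of_mem_nhdsWithin (Icc_mem_nhdsGT hab)
    refine hasDerivWithinAt_Ici_of_tendsto_deriv
      (fun u hu => (hode u hu).differentiableAt.differentiableWithinAt)
      (hxa.mono_left (nhdsWithin_mono _ Ioo_subset_Ioi_self)) (Ioo_mem_nhdsGT hab) ?_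
    refine ((L.continuous.tendsto _).comp hxa).congr' ?_
    filter_upwards [Ioo_mem_nhdsGT hab] with u hu using (hode u hu).deriv.symm
  have hflow (u : ℝ) : HasDerivAt (fun u => exp ((u - a) • L) (x a))
      (L (exp ((u - a) • L) (x a))) u :=
    (hasDerivAt_exp_smul_apply L (x a) (u - a)).comp_sub_const
  refine ODE_solution_unique (v := fun _ => L) (K := ‖L‖₊) (fun _ => L.lipschitz) hx
    (fun u hu => ?_) (fun u _ => (hflow u).continuousAt.continuousWithinAt)
    (fun u _ => (hflow u).hasDerivWithinAt) (by simp) ⟨hab.le, le_rfl⟩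
  rcases hu.1.eq_or_lt with rfl | hau
  · exact hright
  · exact (hode u ⟨hau, hu.2⟩).hasDerivWithinAt

theorem le_exp_mul_of_limsup_slope_le {V : E → ℝ} {L : E →L[ℝ] E} {c : ℝ} (hc : 0 < c)
    (hV : Continuous V) (hV0 : V 0 = 0) (hVpos : ∀ v ≠ 0, 0 < V v)
    (hdini : ∀ v, limsup (fun h : ℝ => (V (exp (h • L) v) - V v) / h) (𝓝[>] 0) ≤ -c * V v)
    (v : E) {t : ℝ} (ht : 0 ≤ t) :
    V (exp (t • L) v) ≤ Real.exp (-c * t) * V v := by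
  set g : ℝ → ℝ := fun s => V (exp (s • L) v)
  have hg : Continuous g := hV.comp (by fun_prop)
  refine le_of_forall_pos_le_add fun ε hε => ?_
  refine image_le_of_liminf_slope_right_lt_deriv_boundary' (f := g) (f' := fun s => -c * g s)
    (B := fun s => Real.exp (-c * s) * V v + ε) (B' := fun s => -c * (Real.exp (-c * s) * V v))
    hg.continuousOn (fun s _ r hr => ?_) (by simp [g, hε.le]) (by fun_prop)
    (fun s _ => ?_) (fun s _ hs => ?_) ⟨ht, le_rfl⟩
  · rw [show 𝓝[>] s = map (· + s) (𝓝[>] 0) by simp, frequently_map]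
    refine (frequently_slope_exp_smul_lt hc hV0 hVpos (hdini _) hr).mono fun h hh => ?_
    simpa [g, slope_def_field, exp_add_smul_apply] using hh
  · exact (((Real.hasDerivAt_exp _).comp s ((hasDerivAt_id s).const_mul (-c))).mul_const _
      |>.add_const ε).hasDerivWithinAt.congr_deriv (by simp; ring)
  · simp only [hs]
    nlinarith

theorem le_exp_mul_of_diniAlong_le {n : ℕ} {V : EuclideanSpace ℝ (Fin n) → ℝ}
    {A : Matrix (Fin n) (Fin n) ℝ} {c : ℝ} (hc : 0 < c) (hV : Continuous V) (hV0 : V 0 = 0)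
    (hVpos : ∀ v ≠ 0, 0 < V v) (hdini : ∀ v, diniAlong V A v ≤ -c * V v)
    {x : ℝ → EuclideanSpace ℝ (Fin n)} {a b : ℝ} (hab : a ≤ b) (hx : ContinuousOn x (Icc a b))
    (hode : ∀ u ∈ Ioo a b, HasDerivAt x (toEuclideanLin A (x u)) u) :
    V (x b) ≤ Real.exp (-c * (b - a)) * V (x a) := by
  rw [eq_exp_smul_apply_of_hasDerivAt (L := toEuclideanCLM (𝕜 := ℝ) A) hab hx hode]
  exact le_exp_mul_of_limsup_slope_le hc hV hV0 hVpos
    (fun v => diniAlong_eq_limsup V A v ▸ hdini v) _ (sub_nonneg.2 hab)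

end LinearFlow

theorem Nat.exists_le_and_lt_succ {α : Type*} [LinearOrder α] {s : ℕ → α} {t : α}
    (h0 : s 0 ≤ t) (h : ∃ n, t < s n) : ∃ m, s m ≤ t ∧ t < s (m + 1) := by
  classical
  obtain ⟨m, hm⟩ : ∃ m, Nat.find h = m + 1 := Nat.exists_eq_succ_of_ne_zero fun hzero =>
    (Nat.find_spec h).not_ge (hzero ▸ h0)
  exact ⟨m, not_lt.1 (Nat.find_min h (by omega)), hm ▸ Nat.find_spec h⟩

theorem le_pow_mul_exp_of_decay_of_jump {s : ℕ → ℝ} {W : ℕ → ℝ → ℝ} {c μ : ℝ}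
    (hs : Monotone s) (hμ : 0 ≤ μ)
    (hdecay : ∀ k t, s k ≤ t → t ≤ s (k + 1) → W k t ≤ Real.exp (-c * (t - s k)) * W k (s k))
    (hjump : ∀ k, W (k + 1) (s (k + 1)) ≤ μ * W k (s (k + 1))) (m : ℕ) {t : ℝ}
    (hmt : s m ≤ t) (htm : t ≤ s (m + 1)) :
    W m t ≤ μ ^ m * Real.exp (-c * (t - s 0)) * W 0 (s 0) := by
  induction m generalizing t with
  | zero => simpa using hdecay 0 t hmt htm
  | succ m ih =>
    have hexp : Real.exp (-c * (t - s (m + 1))) * Real.exp (-c * (s (m + 1) - s 0)) =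
        Real.exp (-c * (t - s 0)) := by
      rw [← Real.exp_add]; ring_nf
    calc W (m + 1) t ≤ Real.exp (-c * (t - s (m + 1))) * W (m + 1) (s (m + 1)) :=
          hdecay (m + 1) t hmt htm
      _ ≤ Real.exp (-c * (t - s (m + 1))) * (μ * W m (s (m + 1))) := by gcongr; exact hjump m
      _ ≤ Real.exp (-c * (t - s (m + 1))) *
            (μ * (μ ^ m * Real.exp (-c * (s (m + 1) - s 0)) * W 0 (s 0))) := by
          gcongr; exact ih (hs m.le_succ) le_rfl
      _ = μ ^ (m + 1) * Real.exp (-c * (t - s 0)) * W 0 (s 0) := by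
          rw [← hexp]; ring

theorem pow_mul_exp_le_rpow_mul_exp {μ c τa N0 t : ℝ} {m : ℕ} (hμ : 1 ≤ μ)
    (hm : (m : ℝ) ≤ N0 + t / τa) :
    μ ^ m * Real.exp (-c * t) ≤ μ ^ N0 * Real.exp (-(c - Real.log μ / τa) * t) := by
  have hμ0 : 0 < μ := zero_lt_one.trans_le hμ
  calc μ ^ m * Real.exp (-c * t) ≤ μ ^ (N0 + t / τa) * Real.exp (-c * t) := by
        gcongr
        exact_mod_cast Real.rpow_le_rpow_of_exponent_le hμ hm
    _ = μ ^ N0 * Real.exp (-(c - Real.log μ / τa) * t) := by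
        rw [Real.rpow_add hμ0, Real.rpow_def_of_pos hμ0 (t / τa), mul_assoc, ← Real.exp_add]
        ring_nf

theorem pos_and_decayRate_pos {abar α μ τa : ℝ} (habar : 0 < abar) (hα : 0 < α) (hμ : 1 ≤ μ)
    (hτa : abar * Real.log μ / α < τa) : 0 < τa ∧ 0 < α / abar - Real.log μ / τa := by
  have hτa0 : 0 < τa := (div_nonneg (mul_nonneg habar.le (Real.log_nonneg hμ)) hα.le).trans_lt hτa
  rw [div_lt_iff₀ hα] at hτa
  refine ⟨hτa0, ?_⟩
  rw [sub_pos, div_lt_div_iff₀ hτa0 habar]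
  linarith

theorem le_mul_of_forall_ne_le_mul {ι β : Type*} {V : ι → β → ℝ} {μ : ℝ} (hμ : 1 ≤ μ)
    (hV : ∀ i y, 0 ≤ V i y) (h : ∀ i j, i ≠ j → ∀ y, V i y ≤ μ * V j y) (i j : ι) (y : β) :
    V i y ≤ μ * V j y := by
  rcases eq_or_ne i j with rfl | hij
  · exact le_mul_of_one_le_left (hV i y) hμ
  · exact h i j hij y

/-- The `k`-th interval of constant mode is `[switchTime tk k, switchTime tk (k + 1))`: the
initial time `0` followed by the switching times `tk`. -/
def switchTime (tk : ℕ → ℝ) : ℕ → ℝ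
  | 0 => 0
  | k + 1 => tk k

section SwitchTime

variable {tk : ℕ → ℝ}

theorem strictMono_switchTime (htk : StrictMono tk) (htk0 : 0 < tk 0) :
    StrictMono (switchTime tk) :=
  strictMono_nat_of_lt_succ fun
    | 0 => htk0
    | k + 1 => htk k.lt_succ_self

theorem notMem_range_of_mem_Ioo_switchTime (htk : StrictMono tk) (htk0 : 0 < tk 0) {k : ℕ}
    {u : ℝ} (hu : u ∈ Ioo (switchTime tk k) (switchTime tk (k + 1))) : u ∉ range tk := by
  rintro ⟨j, rfl⟩
  have hs := strictMono_switchTime htk htk0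
  have hkj : k < j + 1 := hs.lt_iff_lt.1 hu.1
  have hjk : j + 1 < k + 1 := hs.lt_iff_lt.1 hu.2
  omega

theorem mode_eq_of_mem_Ico_switchTime {ι : Type*} {σ : ℝ → ι}
    (hσ : ∀ k : ℕ, ∀ u, tk k ≤ u → u < tk (k + 1) → σ u = σ (tk k))
    (hσ0 : ∀ u, 0 ≤ u → u < tk 0 → σ u = σ 0) {k : ℕ} {u : ℝ}
    (hku : switchTime tk k ≤ u) (huk : u < switchTime tk (k + 1)) :
    σ u = σ (switchTime tk k) := by
  cases k with
  | zero => exact hσ0 u hku huk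
  | succ k => exact hσ k u hku huk

theorem hasDerivAt_of_mem_Ioo_switchTime {n : ℕ} {ι : Type*}
    {A : ι → Matrix (Fin n) (Fin n) ℝ} {σ : ℝ → ι} {x : ℝ → EuclideanSpace ℝ (Fin n)}
    (htk : StrictMono tk) (htk0 : 0 < tk 0)
    (hσ : ∀ k : ℕ, ∀ u, tk k ≤ u → u < tk (k + 1) → σ u = σ (tk k))
    (hσ0 : ∀ u, 0 ≤ u → u < tk 0 → σ u = σ 0)
    (hxode : ∀ t, 0 ≤ t → t ∉ range tk → HasDerivAt x (toEuclideanLin (A (σ t)) (x t)) t)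
    {k : ℕ} {u : ℝ} (hu : u ∈ Ioo (switchTime tk k) (switchTime tk (k + 1))) :
    HasDerivAt x (toEuclideanLin (A (σ (switchTime tk k))) (x u)) u := by
  have hu0 : 0 ≤ u := ((strictMono_switchTime htk htk0).monotone k.zero_le).trans hu.1.le
  rw [← mode_eq_of_mem_Ico_switchTime hσ hσ0 hu.1.le hu.2]
  exact hxode u hu0 (notMem_range_of_mem_Ioo_switchTime htk htk0 hu)

variable {N0 τa : ℝ}

/-- The switches in `(0, t]` are `tk 0, …, tk (m - 1)`; as the dwell-time bound counts
switches in open intervals, it is applied on `(0, t')` and `t' ↓ t`. -/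
theorem natCast_le_of_averageDwellTime (htk : StrictMono tk) (htk0 : 0 < tk 0)
    (hADT : ∀ t, 0 ≤ t → ({k : ℕ | tk k ∈ Ioo 0 t}.ncard : ℝ) ≤ N0 + t / τa) {m : ℕ} {t : ℝ}
    (hmt : switchTime tk m ≤ t) (htm : t < switchTime tk (m + 1)) :
    (m : ℝ) ≤ N0 + t / τa := by
  have hs := strictMono_switchTime htk htk0
  have ht : 0 ≤ t := (hs.monotone m.zero_le).trans hmt
  have hcount : ∀ t' ∈ Ioo t (switchTime tk (m + 1)), (m : ℝ) ≤ N0 + t' / τa := by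
    intro t' ht'
    have hset : {k : ℕ | tk k ∈ Ioo 0 t'} = Iio m := by
      ext k
      change 0 < switchTime tk (k + 1) ∧ switchTime tk (k + 1) < t' ↔ k < m
      refine ⟨fun hk => Nat.succ_lt_succ_iff.1 (hs.lt_iff_lt.1 (hk.2.trans ht'.2)),
        fun hk => ⟨hs k.succ_pos, (hs.monotone hk).trans_lt (hmt.trans_lt ht'.1)⟩⟩
    have := hADT t' (ht.trans ht'.1.le)
    rwa [hset, ncard_Iio_nat] at this
  refine ge_of_tendsto (x := 𝓝[>] t) ?_ (eventually_of_mem (Ioo_mem_nhdsGT htm) hcount)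
  exact tendsto_nhdsWithin_of_tendsto_nhds
    ((continuous_const.add (continuous_id.div_const τa)).tendsto t)

theorem exists_lt_switchTime (htk : StrictMono tk) (htk0 : 0 < tk 0)
    (hADT : ∀ t, 0 ≤ t → ({k : ℕ | tk k ∈ Ioo 0 t}.ncard : ℝ) ≤ N0 + t / τa) (hτa : 0 < τa)
    (T : ℝ) :
    ∃ n, T < switchTime tk n := by
  obtain ⟨n, hn⟩ := exists_nat_gt (N0 + T / τa)
  have hcount := natCast_le_of_averageDwellTime htk htk0 hADT le_rfl
    (strictMono_switchTime htk htk0 n.lt_succ_self)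
  exact ⟨n, (div_lt_div_iff_of_pos_right hτa).1 (by linarith)⟩

end SwitchTime

theorem cpa_dwell_time_exponential_stability_general {n : ℕ} {ι : Type*}
    (A : ι → Matrix (Fin n) (Fin n) ℝ)
    (V : ι → EuclideanSpace ℝ (Fin n) → ℝ)
    (alow abar α μ τa N0 : ℝ)
    (h1 : 0 < alow) (h2 : 0 < abar) (h3 : 0 < α) (hμ : 1 ≤ μ)
    (hτa : τa > abar * Real.log μ / α)
    (hVcont : ∀ i, Continuous (V i))
    (hsandwich : ∀ i x, alow * ‖x‖ ≤ V i x ∧ V i x ≤ abar * ‖x‖)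
    (hdini : ∀ i x, diniAlong (V i) (A i) x ≤ -(α / abar) * V i x)
    (hcompat : ∀ i j, i ≠ j → ∀ x, V i x ≤ μ * V j x)
    -- a solution of the switched system with switching signal σ and switching times tk
    (σ : ℝ → ι) (tk : ℕ → ℝ) (x : ℝ → EuclideanSpace ℝ (Fin n))
    (htk : StrictMono tk) (htk0 : 0 < tk 0)
    (hσ : ∀ k : ℕ, ∀ u, tk k ≤ u → u < tk (k + 1) → σ u = σ (tk k))
    (hσ0 : ∀ u, 0 ≤ u → u < tk 0 → σ u = σ 0)
    (hxcont : Continuous x)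
    (hxode : ∀ t, 0 ≤ t → t ∉ Set.range tk →
      HasDerivAt x (Matrix.toEuclideanLin (A (σ t)) (x t)) t)
    -- average dwell-time property with chatter bound N0
    (hADT : ∀ s t : ℝ, 0 ≤ s → s ≤ t →
      (({k : ℕ | tk k ∈ Set.Ioo s t}.ncard : ℝ) ≤ N0 + (t - s) / τa)) :
    0 < α / abar - Real.log μ / τa ∧
    ∀ t, 0 ≤ t →
      ‖x t‖ ≤ (abar / alow) * μ ^ (N0 : ℝ) *
        Real.exp (-(α / abar - Real.log μ / τa) * t) * ‖x 0‖ := by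
  obtain ⟨hτa0, hrate⟩ := pos_and_decayRate_pos h2 h3 hμ hτa
  refine ⟨hrate, fun t ht => ?_⟩
  set c := α / abar
  set s := switchTime tk
  have hADT0 : ∀ t, 0 ≤ t → ({k : ℕ | tk k ∈ Ioo 0 t}.ncard : ℝ) ≤ N0 + t / τa :=
    fun t ht => by simpa using hADT 0 t le_rfl ht
  have hVnonneg : ∀ i v, 0 ≤ V i v := fun i v => by nlinarith [(hsandwich i v).1, norm_nonneg v]
  have hdecay : ∀ k u, s k ≤ u → u ≤ s (k + 1) →
      V (σ (s k)) (x u) ≤ Real.exp (-c * (u - s k)) * V (σ (s k)) (x (s k)) :=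
    fun k u hku huk => le_exp_mul_of_diniAlong_le (div_pos h3 h2) (hVcont _)
      (le_antisymm (by simpa using (hsandwich _ 0).2) (hVnonneg _ 0))
      (fun v hv => (mul_pos h1 (norm_pos_iff.2 hv)).trans_le (hsandwich _ v).1) (hdini _) hku
      hxcont.continuousOn fun v hv => hasDerivAt_of_mem_Ioo_switchTime htk htk0 hσ hσ0 hxode
        ⟨hv.1, hv.2.trans_le huk⟩
  obtain ⟨m, hmt, htm⟩ :=
    Nat.exists_le_and_lt_succ (s := s) ht (exists_lt_switchTime htk htk0 hADT0 hτa0 t)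
  have hlyap : V (σ t) (x t) ≤ μ ^ m * Real.exp (-c * t) * V (σ 0) (x 0) := by
    rw [mode_eq_of_mem_Ico_switchTime hσ hσ0 hmt htm]
    simpa [s, switchTime] using le_pow_mul_exp_of_decay_of_jump
      (strictMono_switchTime htk htk0).monotone (by linarith) hdecay
      (fun k => le_mul_of_forall_ne_le_mul hμ hVnonneg hcompat _ _ _) m hmt htm.le
  have hpow := pow_mul_exp_le_rpow_mul_exp (c := c) hμ
    (natCast_le_of_averageDwellTime htk htk0 hADT0 hmt htm)
  rw [show abar / alow * μ ^ N0 * Real.exp (-(c - Real.log μ / τa) * t) * ‖x 0‖ =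
    μ ^ N0 * Real.exp (-(c - Real.log μ / τa) * t) * (abar * ‖x 0‖) / alow by ring,
    le_div_iff₀ h1]
  calc ‖x t‖ * alow ≤ V (σ t) (x t) := by linarith [(hsandwich (σ t) (x t)).1]
    _ ≤ μ ^ m * Real.exp (-c * t) * V (σ 0) (x 0) := hlyap
    _ ≤ μ ^ N0 * Real.exp (-(c - Real.log μ / τa) * t) * (abar * ‖x 0‖) :=
      mul_le_mul hpow (hsandwich _ _).2 (hVnonneg _ _) (by positivity)

/-- Continuous multiple Lyapunov functions with linear sandwich bounds,
Dini decrease `D⁺V_i(x, A_i x) ≤ -(α/ā) V_i(x)` and compatibility `V_i ≤ μ V_j` imply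
global exponential stability, uniformly over switching signals with average dwell-time
`τa > ā ln μ / α`:  `‖x(t)‖ ≤ (ā/a̲) μ^{N0} e^{-λ t} ‖x(0)‖` with `λ = α/ā − ln μ/τa > 0`. -/
theorem cpa_dwell_time_exponential_stability {n : ℕ} {ι : Type*} [Fintype ι] [Nonempty ι]
    (A : ι → Matrix (Fin n) (Fin n) ℝ)
    (V : ι → EuclideanSpace ℝ (Fin n) → ℝ)
    (alow abar α μ τa N0 : ℝ)
    (h1 : 0 < alow) (h2 : 0 < abar) (h3 : 0 < α) (hμ : 1 ≤ μ) (hN0 : 0 < N0)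
    (hτa : τa > abar * Real.log μ / α)
    (hVcont : ∀ i, Continuous (V i))
    (hsandwich : ∀ i x, alow * ‖x‖ ≤ V i x ∧ V i x ≤ abar * ‖x‖)
    (hdini : ∀ i x, diniAlong (V i) (A i) x ≤ -(α / abar) * V i x)
    (hcompat : ∀ i j, i ≠ j → ∀ x, V i x ≤ μ * V j x)
    -- a solution of the switched system with switching signal σ and switching times tk
    (σ : ℝ → ι) (tk : ℕ → ℝ) (x : ℝ → EuclideanSpace ℝ (Fin n))
    (htk : StrictMono tk) (htk0 : 0 < tk 0)
    (hσ : ∀ k : ℕ, ∀ u, tk k ≤ u → u < tk (k + 1) → σ u = σ (tk k))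
    (hσ0 : ∀ u, 0 ≤ u → u < tk 0 → σ u = σ 0)
    (hxcont : Continuous x)
    (hxode : ∀ t, 0 ≤ t → t ∉ Set.range tk →
      HasDerivAt x (Matrix.toEuclideanLin (A (σ t)) (x t)) t)
    -- average dwell-time property with chatter bound N0
    (hADT : ∀ s t : ℝ, 0 ≤ s → s ≤ t →
      (({k : ℕ | tk k ∈ Set.Ioo s t}.ncard : ℝ) ≤ N0 + (t - s) / τa)) :
    0 < α / abar - Real.log μ / τa ∧
    ∀ t, 0 ≤ t →
      ‖x t‖ ≤ (abar / alow) * μ ^ (N0 : ℝ) *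
        Real.exp (-(α / abar - Real.log μ / τa) * t) * ‖x 0‖ :=
  cpa_dwell_time_exponential_stability_general A V alow abar α μ τa N0 h1 h2 h3 hμ hτa hVcont
    hsandwich hdini hcompat σ tk x htk htk0 hσ hσ0 hxcont hxode hADT
end

section
/- Consider A₁ = [[-1,-1],[1,-1]] and A₂ = [[-1,-10],[0.1,-1]]. Both A₁ and A₂ are Hurwitz (all eigenvalues have negative real part), but there exists no symmetric positive definite matrix P with A₁ᵀP + PA₁ ≺ 0 and A₂ᵀP + PA₂ ≺ 0 simultaneously (no common quadratic Lyapunov function). -/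
/-!
Both matrices have trace `-2` and determinant `2`, so their eigenvalues are the roots of
`z² + 2z + 2`, which lie in the open left half-plane.

For a symmetric `P = [[a, b], [b, c]]` and `A = [[-1, -k], [1/k, -1]]` one computes
`det (-(AᵀP + PA)) = 6ac - 8b² - k²a² - c²/k²`. Positivity of this determinant forces
`c / (k²a)` into the interval `(3 - 2√2, 3 + 2√2)`, and the intervals for `k = 1` and `k = 10`
are disjoint because `100 > (3 + 2√2)²`.
-/

open Matrix

theorem Matrix.sq_sub_trace_mul_add_det_eq_zero_of_mem_spectrum {K : Type*} [Field K]
    {M : Matrix (Fin 2) (Fin 2) K} {z : K} (hz : z ∈ spectrum K M) :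
    z ^ 2 - M.trace * z + M.det = 0 := by
  simpa [charpoly_fin_two] using mem_spectrum_iff_isRoot_charpoly.mp hz

theorem Complex.re_neg_of_sq_add_mul_add_eq_zero {b c : ℝ} (hb : 0 < b) (hc : 0 < c) {z : ℂ}
    (hz : z ^ 2 + b * z + c = 0) : z.re < 0 := by
  have hre : z.re ^ 2 - z.im ^ 2 + b * z.re + c = 0 := by
    simpa [sq] using congrArg Complex.re hz
  have him : z.re * z.im + z.im * z.re + b * z.im = 0 := by
    simpa [sq] using congrArg Complex.im hz
  rcases mul_eq_zero.mp (show z.im * (2 * z.re + b) = 0 by linear_combination him) with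
    him_zero | hre_eq
  · nlinarith
  · linarith

theorem Matrix.re_neg_of_mem_spectrum_of_trace_neg_of_det_pos {A : Matrix (Fin 2) (Fin 2) ℝ}
    (htr : A.trace < 0) (hdet : 0 < A.det) :
    ∀ z ∈ spectrum ℂ (A.map (algebraMap ℝ ℂ)), z.re < 0 := by
  intro z hz
  have hchar := sq_sub_trace_mul_add_det_eq_zero_of_mem_spectrum hz
  rw [← AddMonoidHom.map_trace, show (A.map (algebraMap ℝ ℂ)).det = algebraMap ℝ ℂ A.det from
    (RingHom.map_det _ A).symm] at hchar
  refine Complex.re_neg_of_sq_add_mul_add_eq_zero (neg_pos.mpr htr) hdet ?_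
  simpa [sub_eq_add_neg] using hchar

noncomputable def dayawansaMartin (k : ℝ) : Matrix (Fin 2) (Fin 2) ℝ := !![-1, -k; k⁻¹, -1]

theorem trace_dayawansaMartin (k : ℝ) : (dayawansaMartin k).trace = -2 := by
  norm_num [dayawansaMartin, trace_fin_two_of]

theorem det_dayawansaMartin {k : ℝ} (hk : k ≠ 0) : (dayawansaMartin k).det = 2 := by
  norm_num [dayawansaMartin, det_fin_two_of, hk]

theorem re_neg_of_mem_spectrum_dayawansaMartin {k : ℝ} (hk : k ≠ 0) :
    ∀ z ∈ spectrum ℂ ((dayawansaMartin k).map (algebraMap ℝ ℂ)), z.re < 0 :=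
  re_neg_of_mem_spectrum_of_trace_neg_of_det_pos (by norm_num [trace_dayawansaMartin])
    (by norm_num [det_dayawansaMartin hk])

theorem det_neg_lyapunov_dayawansaMartin {k : ℝ} (hk : k ≠ 0) {P : Matrix (Fin 2) (Fin 2) ℝ}
    (hP : P.IsSymm) :
    (-((dayawansaMartin k)ᵀ * P + P * dayawansaMartin k)).det =
      6 * P 0 0 * P 1 1 - 8 * P 0 1 ^ 2 - k ^ 2 * P 0 0 ^ 2 - P 1 1 ^ 2 / k ^ 2 := by
  have hP10 : P 1 0 = P 0 1 := hP.apply 0 1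
  rw [det_fin_two]
  simp [dayawansaMartin, mul_apply, Fin.sum_univ_two, hP10]
  field_simp
  ring

theorem not_pos_lyapunov_dets_one_ten (a b c : ℝ) :
    ¬ (0 < 6 * a * c - 8 * b ^ 2 - 1 ^ 2 * a ^ 2 - c ^ 2 / 1 ^ 2 ∧
      0 < 6 * a * c - 8 * b ^ 2 - 10 ^ 2 * a ^ 2 - c ^ 2 / 10 ^ 2) := by
  rintro ⟨h₁, h₁₀⟩
  -- `10 h₁ + h₁₀` has left side `-(110 (a - 3c/10)² + 11c²/100 + 88b²) ≤ 0`.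
  linarith [sq_nonneg (a - 3 / 10 * c), sq_nonneg c, sq_nonneg b]

/-- Dayawansa–Martin example: For
`A₁ = [[-1,-1],[1,-1]]` and `A₂ = [[-1,-10],[0.1,-1]]`, both matrices are Hurwitz
(all complex eigenvalues have negative real part), but no symmetric positive definite `P`
satisfies `A₁ᵀP + PA₁ ≺ 0` and `A₂ᵀP + PA₂ ≺ 0` simultaneously. -/
theorem no_common_quadratic_lyapunov :
    let A₁ : Matrix (Fin 2) (Fin 2) ℝ := !![-1, -1; 1, -1]
    let A₂ : Matrix (Fin 2) (Fin 2) ℝ := !![-1, -10; 0.1, -1]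
    (∀ z ∈ spectrum ℂ (A₁.map (algebraMap ℝ ℂ)), z.re < 0) ∧
    (∀ z ∈ spectrum ℂ (A₂.map (algebraMap ℝ ℂ)), z.re < 0) ∧
    ¬ ∃ P : Matrix (Fin 2) (Fin 2) ℝ, P.PosDef ∧
      (-(A₁ᵀ * P + P * A₁)).PosDef ∧ (-(A₂ᵀ * P + P * A₂)).PosDef := by
  intro A₁ A₂
  have hA₁ : A₁ = dayawansaMartin 1 := by norm_num [A₁, dayawansaMartin]
  have hA₂ : A₂ = dayawansaMartin 10 := by norm_num [A₂, dayawansaMartin]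
  rw [hA₁, hA₂]
  refine ⟨re_neg_of_mem_spectrum_dayawansaMartin one_ne_zero,
    re_neg_of_mem_spectrum_dayawansaMartin (by norm_num), ?_⟩
  rintro ⟨P, hP, hQ₁, hQ₁₀⟩
  have hPsymm : P.IsSymm := isHermitian_iff_isSymm.mp hP.isHermitian
  have h₁ := hQ₁.det_pos
  have h₁₀ := hQ₁₀.det_pos
  rw [det_neg_lyapunov_dayawansaMartin one_ne_zero hPsymm] at h₁
  rw [det_neg_lyapunov_dayawansaMartin (by norm_num) hPsymm] at h₁₀
  exact not_pos_lyapunov_dets_one_ten _ _ _ ⟨h₁, h₁₀⟩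
end
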